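/- arXiv:1604.07089 — 5 statements merged into one kernel-verified Lean document; each statement's English description precedes it below -/
import Mathlib

section
/- Let p be a prime and j ≥ 0 an integer. There is at most one polynomial P_j with rational coefficients in the variables X_w indexed by w ∈ W such that θ_p(j,n) = θ_p(0,n) · P_j((|n|_w)_{w ∈ W}) holds for all nonnegative integers n. That is, if two such polynomials both satisfy this identity for all n ≥ 0, then they are equal. -/
open Finset

/-- `theta p j n` is the number of `t ∈ {0,…,n}` with `ν_p (binom n t) = j`. -/
def theta (p j n : ℕ) : ℕ :=
  ((Finset.range (n + 1)).filter fun t => padicValNat p (n.choose t) = j).card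

/-- the base-`p` digit of `n` at position `i`. -/
def digit (p n i : ℕ) : ℕ := n / p ^ i % p

/-- Words over `{0,…,p−1}` are represented as lists, least significant (rightmost) letter
first; `wordCount p w n` is the number of occurrences of `w` as a factor of the base-`p`
expansion of `n` (padded with leading zeros). -/
noncomputable def wordCount (p : ℕ) (w : List ℕ) (n : ℕ) : ℕ :=
  Set.ncard {i : ℕ | ∀ k < w.length, digit p n (i + k) = w.getD k 0}

/-- membership in the set `W` of admissible words: length ≥ 2, letters `< p`,
leftmost letter (last entry of the list) nonzero, rightmost letter (head) ≠ p−1. -/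
def Adm (p : ℕ) (w : List ℕ) : Prop :=
  2 ≤ w.length ∧ (∀ a ∈ w, a < p) ∧ w.getD (w.length - 1) 0 ≠ 0 ∧ w.getD 0 0 ≠ p - 1

/-- membership in `W_j`. -/
def AdmJ (p j : ℕ) (w : List ℕ) : Prop := Adm p w ∧ w.length ≤ j + 1

/-- membership in `W̃`: nonempty words with letters `< p` and nonzero leftmost letter. -/
def Wt (p : ℕ) (w : List ℕ) : Prop :=
  w ≠ [] ∧ (∀ a ∈ w, a < p) ∧ w.getD (w.length - 1) 0 ≠ 0

/-- The polynomial `T_n(x) = Σ_{t=0}^n x^{ν_p(binom n t)}`. -/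
noncomputable def Tpoly (p n : ℕ) : Polynomial ℤ :=
  ∑ t ∈ Finset.range (n + 1), Polynomial.X ^ padicValNat p (n.choose t)

/-- right truncation: remove the rightmost letter. -/
def rightT (w : List ℕ) : List ℕ := w.tail

/-- left truncation: remove the leftmost letter together with the zeros following it. -/
def leftT (w : List ℕ) : List ℕ := ((w.dropLast).reverse.dropWhile (· = 0)).reverse

/-- the common value `w_{LR} = (w_L)_R = (w_R)_L`. -/
def lrT (w : List ℕ) : List ℕ := leftT w.tail

/-- `T̄_v = T_{(v)_p}/θ_p(0,(v)_p)` as a rational function over `ℚ`. -/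
noncomputable def TbarR (p : ℕ) (v : List ℕ) : RatFunc ℚ :=
  algebraMap (Polynomial ℚ) (RatFunc ℚ) ((Tpoly p (Nat.ofDigits p v)).map (Int.castRingHom ℚ)) /
    (theta p 0 (Nat.ofDigits p v) : RatFunc ℚ)

/-- the rational function `r_w`. -/
noncomputable def rFun (p : ℕ) (w : List ℕ) : RatFunc ℚ :=
  TbarR p w * TbarR p (lrT w) / (TbarR p (rightT w) * TbarR p (leftT w))

/-- `T̄_v` as a power series over `ℚ`. -/
noncomputable def TbarS (p : ℕ) (v : List ℕ) : PowerSeries ℚ :=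
  (((Tpoly p (Nat.ofDigits p v)).map (Int.castRingHom ℚ) : Polynomial ℚ) : PowerSeries ℚ) *
    (PowerSeries.C (theta p 0 (Nat.ofDigits p v) : ℚ))⁻¹

/-- the power series expansion of `r_w` at `0`. -/
noncomputable def rSer (p : ℕ) (w : List ℕ) : PowerSeries ℚ :=
  TbarS p w * TbarS p (lrT w) * (TbarS p (rightT w) * TbarS p (leftT w))⁻¹

/-- `T̄_v` as a polynomial over `ℚ`. -/
noncomputable def TbarP (p : ℕ) (v : List ℕ) : Polynomial ℚ :=
  ((theta p 0 (Nat.ofDigits p v) : ℚ))⁻¹ • ((Tpoly p (Nat.ofDigits p v)).map (Int.castRingHom ℚ))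

/-- formal logarithm of a power series with constant term 1. -/
noncomputable def logPS {K : Type*} [Field K] (f : PowerSeries K) : PowerSeries K :=
  PowerSeries.mk fun n => ∑ k ∈ Finset.range (n + 1),
    ((-1 : K) ^ (k + 1) / k) * PowerSeries.coeff n ((f - 1) ^ k)

/-- formal exponential of a power series with constant term 0. -/
noncomputable def expPS {K : Type*} [Field K] (f : PowerSeries K) : PowerSeries K :=
  PowerSeries.mk fun n => ∑ k ∈ Finset.range (n + 1),
    ((k.factorial : K))⁻¹ * PowerSeries.coeff n (f ^ k)

/-- integer powers of a power series over a field. -/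
noncomputable def fpow {K : Type*} [Field K] (f : PowerSeries K) (z : ℤ) : PowerSeries K :=
  if 0 ≤ z then f ^ z.toNat else f⁻¹ ^ (-z).toNat

/-- sum of base-`p` digits. -/
def digitSum (p n : ℕ) : ℕ := (Nat.digits p n).sum

/-!
Let `f` vanish at the word-count vectors of all `n`, and let `L` bound the lengths of its
variables. Take `n` whose base-`p` digits, least significant first, are a concatenation of blocks
`0^L (p-1)^L v`, with `v` a variable of `f` or empty, each block repeated any number of times.
An admissible word of length `≤ L` has a nonzero leading letter, so none of its occurrences
straddles two blocks, and its count in `n` is an `ℕ`-linear combination of its counts in the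
blocks. Hence `f` composed with a linear map vanishes on `ℕ^k`, so this composite is zero.
The lowest letter of an admissible word is not `p - 1`, so no occurrence starts inside the
`(p-1)`-run: the block of `v` minus the block of the empty word counts the occurrences inside
`v`, a system that is unitriangular with respect to length. The linear map is therefore onto,
and `f = 0`.
-/

theorem Submodule.span_range_eq_top_of_triangular {ι K : Type*} [Fintype ι] [DecidableEq ι]
    [DivisionRing K] (d : ι → ι → K) (level : ι → ℕ) (hdiag : ∀ i, d i i ≠ 0)
    (hlt : ∀ i j, j ≠ i → d i j ≠ 0 → level j < level i) :
    span K (Set.range d) = ⊤ := by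
  have hsingle : ∀ n i, level i = n → Pi.single i 1 ∈ span K (Set.range d) := by
    intro n
    induction n using Nat.strong_induction_on with
    | _ n ih =>
      rintro i rfl
      have hrest : ∑ j ∈ univ.erase i, d i j • Pi.single j 1 ∈ span K (Set.range d) := by
        refine sum_mem fun j hj => ?_
        rcases eq_or_ne (d i j) 0 with h | h
        · rw [h, zero_smul]
          exact zero_mem _
        · exact smul_mem _ _ (ih _ (hlt i j (ne_of_mem_erase hj) h) j rfl)
      have hdecomp :
          d i = d i i • Pi.single i 1 + ∑ j ∈ univ.erase i, d i j • Pi.single j 1 := by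
        rw [add_sum_erase _ (fun j => d i j • Pi.single j 1) (mem_univ i)]
        exact pi_eq_sum_univ' (d i)
      rw [← inv_smul_smul₀ (hdiag i) (Pi.single i 1 : ι → K), eq_sub_of_add_eq hdecomp.symm]
      exact smul_mem _ _ (sub_mem (subset_span ⟨i, rfl⟩) hrest)
  refine eq_top_iff'.2 fun x => ?_
  rw [pi_eq_sum_univ' x]
  exact sum_mem fun i _ => smul_mem _ _ (hsingle _ i rfl)

theorem MvPolynomial.eq_zero_of_eval_natCast_sum {σ ι K : Type*} [CommRing K] [IsDomain K]
    [CharZero K] [Fintype ι] (f : MvPolynomial σ K) (col : ι → σ → K)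
    (hspan : ∀ x : σ → K, ∃ y : ι → K, ∀ s ∈ f.vars, x s = ∑ i, y i * col i s)
    (hf : ∀ c : ι → ℕ, eval (fun s => ∑ i, (c i : K) * col i s) f = 0) : f = 0 := by
  set g := bind₁ (fun s => ∑ i, C (col i s) * X i) f
  have heval : ∀ y, eval y g = eval (fun s => ∑ i, y i * col i s) f := fun y => by
    simp only [g, eval, eval₂Hom_bind₁]
    simp [mul_comm]
  have hg : g = 0 := by
    refine funext_set (fun _ => Set.range ((↑) : ℕ → K))
      (fun _ => Set.infinite_range_of_injective Nat.cast_injective) fun y hy => ?_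
    choose c hc using fun i => hy i (Set.mem_univ i)
    rw [map_zero, heval, ← hf c]
    simp only [hc]
  have := CharZero.infinite K
  refine funext fun x => ?_
  obtain ⟨y, hy⟩ := hspan x
  rw [map_zero, ← map_zero (eval y), ← hg, heval]
  exact eval₂Hom_congr' rfl (fun s hs _ => hy s hs) rfl

theorem digit_ofDigits {p : ℕ} {D : List ℕ} (hD : ∀ a ∈ D, a < p) (i : ℕ) :
    digit p (Nat.ofDigits p D) i = D.getD i 0 := by
  rcases eq_or_ne D [] with rfl | hne
  · simp [digit]
  have hp : 0 < p := (Nat.zero_le _).trans_lt (hD _ (D.head_mem hne))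
  rw [digit, Nat.ofDigits_div_pow_eq_ofDigits_drop i hp D hD, Nat.ofDigits_mod_eq_head!]
  rcases lt_or_ge i D.length with hi | hi
  · rw [List.drop_eq_getElem_cons hi, List.head!_cons, List.getD_eq_getElem _ _ hi]
    exact Nat.mod_eq_of_lt (hD _ (List.getElem_mem hi))
  · rw [List.drop_eq_nil_of_le hi, List.getD_eq_default _ _ hi]
    rfl

def OccursAt (u D : List ℕ) (i : ℕ) : Prop :=
  ∀ k < u.length, D.getD (i + k) 0 = u.getD k 0

instance (u D : List ℕ) : DecidablePred (OccursAt u D) :=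
  fun _ => inferInstanceAs (Decidable (∀ k < u.length, _))

def occCount (u D : List ℕ) : ℕ := #{i ∈ range D.length | OccursAt u D i}

def runBlock (L a : ℕ) (v : List ℕ) : List ℕ :=
  List.replicate L 0 ++ (List.replicate L a ++ v)

section Occurrences

variable {u D : List ℕ} {i : ℕ}

theorem OccursAt.lt_length (h : OccursAt u D i) (hu : u.getD (u.length - 1) 0 ≠ 0) :
    i + (u.length - 1) < D.length := by
  have hpos : 0 < u.length := List.length_pos_of_ne_nil (by rintro rfl; exact hu rfl)
  by_contra hlt
  have htop := h (u.length - 1) (by omega)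
  rw [List.getD_eq_default _ _ (by omega)] at htop
  exact hu htop.symm

theorem wordCount_ofDigits {p : ℕ} (hD : ∀ a ∈ D, a < p)
    (hu : u.getD (u.length - 1) 0 ≠ 0) :
    wordCount p u (Nat.ofDigits p D) = occCount u D := by
  have hset : {i | ∀ k < u.length, digit p (Nat.ofDigits p D) (i + k) = u.getD k 0} =
      ↑({i ∈ range D.length | OccursAt u D i} : Finset ℕ) := by
    ext i
    simp only [digit_ofDigits hD, Set.mem_ofPred_eq, coe_filter, mem_range]
    exact ⟨fun h => ⟨by have := OccursAt.lt_length h hu; omega, h⟩, And.right⟩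
  rw [wordCount, hset, Set.ncard_coe_finset, occCount]

theorem occursAt_append_length_add {A T : List ℕ} :
    OccursAt u (A ++ T) (A.length + i) ↔ OccursAt u T i := by
  refine forall₂_congr fun k _ => ?_
  rw [List.getD_append_right _ _ _ _ (by omega), Nat.add_assoc, Nat.add_sub_cancel_left]

theorem occCount_append_of_forall_lt {A T : List ℕ}
    (h : ∀ i < A.length, OccursAt u (A ++ T) i ↔ OccursAt u A i) :
    occCount u (A ++ T) = occCount u A + occCount u T := by
  simp only [occCount, card_filter, List.length_append, sum_range_add,
    occursAt_append_length_add]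
  congr 1
  exact sum_congr rfl fun i hi => if_congr (h i (mem_range.1 hi)) rfl rfl

/-- No occurrence straddles `A` and `T`: its top letter would be one of the zeros of `T`. -/
theorem occCount_append_of_getD_eq_zero {A T : List ℕ} (hu : u.getD (u.length - 1) 0 ≠ 0)
    (hT : ∀ k < u.length, T.getD k 0 = 0) :
    occCount u (A ++ T) = occCount u A + occCount u T := by
  refine occCount_append_of_forall_lt fun i hi => ⟨fun h => ?_, fun h k hk => ?_⟩
  · have hfit : i + (u.length - 1) < A.length := by
      by_contra hlt
      have htop := h (u.length - 1) (by
        have := h.lt_length hu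
        rw [List.length_append] at this
        omega)
      rw [List.getD_append_right _ _ _ _ (by omega), hT _ (by omega)] at htop
      exact hu htop.symm
    intro k hk
    rw [← h k hk, List.getD_append _ _ _ _ (by omega)]
  · rw [← h k hk, List.getD_append _ _ _ _ (by have := h.lt_length hu; omega)]

/-- An occurrence of `u` cannot start in the run of `a`s; one starting among the zeros ends
before `r`. -/
theorem occCount_runBlock {L a : ℕ} (hL : u.length ≤ L) (hbot : u.getD 0 0 ≠ a)
    (r : List ℕ) :
    occCount u (runBlock L a r) = occCount u (runBlock L a []) + occCount u r := by
  rw [runBlock, runBlock, List.append_nil, ← List.append_assoc]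
  refine occCount_append_of_forall_lt fun i hi => ?_
  simp only [List.length_append, List.length_replicate] at hi
  rcases lt_or_ge i L with hiL | hiL
  · refine forall₂_congr fun k hk => ?_
    rw [List.getD_append _ _ _ _ (by simp only [List.length_append, List.length_replicate]; omega)]
  rcases u.length.eq_zero_or_pos with hu0 | hu0
  · simp [OccursAt, hu0]
  have hrun : ∀ s, (List.replicate L 0 ++ List.replicate L a ++ s).getD i 0 = a := fun s => by
    rw [List.append_assoc,
      List.getD_append_right _ _ _ _ (by simp only [List.length_replicate]; omega),
      List.getD_append _ _ _ _ (by simp only [List.length_replicate]; omega),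
      List.getD_replicate _ (by simp only [List.length_replicate]; omega)]
  refine iff_of_false (fun h => hbot ?_) (fun h => hbot ?_)
  · rw [← h 0 hu0, add_zero, hrun]
  · rw [← h 0 hu0, add_zero, ← List.append_nil (_ ++ _), hrun]

theorem occCount_flatten_map_runBlock {L a : ℕ} (hL : u.length ≤ L)
    (hu : u.getD (u.length - 1) 0 ≠ 0) (rs : List (List ℕ)) :
    occCount u (rs.map (runBlock L a)).flatten =
      (rs.map fun r => occCount u (runBlock L a r)).sum := by
  induction rs with
  | nil => rfl
  | cons r rs ih =>
    rw [List.map_cons, List.flatten_cons, occCount_append_of_getD_eq_zero hu, ih,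
      List.map_cons, List.sum_cons]
    intro k hk
    cases rs with
    | nil => rfl
    | cons r' rs =>
      rw [List.map_cons, List.flatten_cons, runBlock, List.append_assoc,
        List.getD_append _ _ _ _ (by simp only [List.length_replicate]; omega),
        List.getD_replicate _ (by omega)]

theorem occCount_self_ne_zero (hu : u ≠ []) : occCount u u ≠ 0 :=
  card_ne_zero.2 ⟨0, mem_filter.2 ⟨mem_range.2 (List.length_pos_of_ne_nil hu),
    fun k _ => by rw [zero_add]⟩⟩

theorem eq_or_length_lt_of_occCount_ne_zero {v : List ℕ} (hu : u.getD (u.length - 1) 0 ≠ 0)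
    (h : occCount u v ≠ 0) : u = v ∨ u.length < v.length := by
  obtain ⟨i, hi⟩ := card_ne_zero.1 h
  obtain ⟨-, hocc⟩ := mem_filter.1 hi
  have hfit := hocc.lt_length hu
  refine (lt_or_ge u.length v.length).elim Or.inr fun hge => Or.inl ?_
  have hi0 : i = 0 := by omega
  subst hi0
  refine List.ext_getElem (by omega) fun k hku hkv => ?_
  have := hocc k hku
  rwa [zero_add, List.getD_eq_getElem _ _ hkv, List.getD_eq_getElem _ _ hku, eq_comm] at this

end Occurrences

theorem exists_wordCount_eq_sum {p L a : ℕ} {ι : Type*} [Fintype ι] (hp : 0 < p) (ha : a < p)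
    (rs : ι → List ℕ) (hrs : ∀ i, ∀ b ∈ rs i, b < p) (c : ι → ℕ) :
    ∃ n, ∀ u : List ℕ, u.length ≤ L → u.getD (u.length - 1) 0 ≠ 0 →
      wordCount p u n = ∑ i, c i * occCount u (runBlock L a (rs i)) := by
  set blocks := univ.toList.flatMap fun i => List.replicate (c i) (rs i)
  have hD : ∀ b ∈ (blocks.map (runBlock L a)).flatten, b < p := by
    simp only [blocks, List.mem_flatten, List.mem_map, List.mem_flatMap, List.mem_replicate]
    rintro b ⟨_, ⟨r, ⟨i, -, -, rfl⟩, rfl⟩, hb⟩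
    simp only [runBlock, List.mem_append, List.mem_replicate] at hb
    rcases hb with ⟨-, rfl⟩ | ⟨-, rfl⟩ | hb
    exacts [hp, ha, hrs i b hb]
  refine ⟨Nat.ofDigits p (blocks.map (runBlock L a)).flatten, fun u hL hu => ?_⟩
  rw [wordCount_ofDigits hD hu, occCount_flatten_map_runBlock hL hu]
  simp [blocks, List.flatMap, List.sum_flatten, List.map_replicate, Finset.sum_map_toList]

theorem exists_eq_sum_mul_occCount_runBlock {K : Type*} [Field K] [CharZero K] {p L : ℕ}
    (V : Finset {w // Adm p w}) (hL : ∀ u ∈ V, u.1.length ≤ L) (x : {w // Adm p w} → K) :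
    ∃ y : Option V → K, ∀ u ∈ V,
      x u = ∑ i, y i * occCount u.1 (runBlock L (p - 1) (i.elim [] (·.1.1))) := by
  classical
  have hspan := Submodule.span_range_eq_top_of_triangular
    (fun v u : V => (occCount u.1.1 v.1.1 : K)) (fun v => v.1.1.length)
    (fun v => Nat.cast_ne_zero.2 (occCount_self_ne_zero (List.ne_nil_of_length_pos
      (by have := v.1.2.1; omega))))
    (fun v u hne h => (eq_or_length_lt_of_occCount_ne_zero u.1.2.2.2.1
      (fun h0 => h (by rw [h0, Nat.cast_zero]))).resolve_left
      fun heq => hne (Subtype.ext (Subtype.ext heq)))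
  obtain ⟨z, hz⟩ := (Submodule.mem_span_range_iff_exists_fun K).1
    (hspan ▸ Submodule.mem_top : (fun u : V => x u) ∈ _)
  -- `y none` cancels the count inside `0^L (p-1)^L`, which every block contributes.
  refine ⟨fun i => i.elim (-∑ v, z v) z, fun u hu => ?_⟩
  have hx := congrFun hz ⟨u, hu⟩
  simp only [Finset.sum_apply, Pi.smul_apply, smul_eq_mul] at hx
  have hblock (v : V) := occCount_runBlock (hL u hu) u.2.2.2.2 v.1.1
  rw [Fintype.sum_option, ← hx]
  simp only [Option.elim, hblock, Nat.cast_add, mul_add, sum_add_distrib, ← sum_mul]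
  ring

theorem MvPolynomial.eq_zero_of_eval_wordCount {K : Type*} [Field K] [CharZero K] {p : ℕ}
    (hp : 0 < p) (f : MvPolynomial {w // Adm p w} K)
    (hf : ∀ n, eval (fun w => (wordCount p w.1 n : K)) f = 0) : f = 0 := by
  set L := f.vars.sup fun w => w.1.length
  have hL : ∀ u ∈ f.vars, u.1.length ≤ L := fun u hu => le_sup (f := fun w => w.1.length) hu
  refine eq_zero_of_eval_natCast_sum f
    (fun (i : Option f.vars) u => (occCount u.1 (runBlock L (p - 1) (i.elim [] (·.1.1))) : K))
    (exists_eq_sum_mul_occCount_runBlock f.vars hL) fun c => ?_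
  have hletters : ∀ (i : Option f.vars), ∀ a ∈ i.elim [] (·.1.1), a < p := by
    rintro (_ | v) a ha
    exacts [absurd ha List.not_mem_nil, v.1.2.2.1 a ha]
  obtain ⟨n, hn⟩ := exists_wordCount_eq_sum (L := L) hp (Nat.sub_lt hp one_pos) _ hletters c
  rw [← hf n]
  refine eval₂Hom_congr' rfl (fun u hu _ => ?_) rfl
  rw [hn u.1 (hL u hu) u.2.2.2.1]
  push_cast
  rfl

theorem theta_zero_ne_zero (p n : ℕ) : theta p 0 n ≠ 0 :=
  card_ne_zero.2 ⟨0, mem_filter.2 ⟨mem_range.2 n.succ_pos, by simp⟩⟩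

/-- uniqueness of the polynomial `P_j` in the variables `X_w`, `w ∈ W`. -/
theorem stmt1 (p j : ℕ) (hp : p.Prime)
    (P Q : MvPolynomial {w : List ℕ // Adm p w} ℚ)
    (hP : ∀ n : ℕ, (theta p j n : ℚ) =
      (theta p 0 n : ℚ) * MvPolynomial.eval (fun w => (wordCount p w.1 n : ℚ)) P)
    (hQ : ∀ n : ℕ, (theta p j n : ℚ) =
      (theta p 0 n : ℚ) * MvPolynomial.eval (fun w => (wordCount p w.1 n : ℚ)) Q) :
    P = Q := by
  rw [← sub_eq_zero]
  refine MvPolynomial.eq_zero_of_eval_wordCount hp.pos (P - Q) fun n => ?_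
  rw [map_sub, sub_eq_zero]
  exact mul_left_cancel₀ (Nat.cast_ne_zero.2 (theta_zero_ne_zero p n)) ((hP n).symm.trans (hQ n))
end

section
/- Let p be a prime. Then T_a(x) = a+1 for 0 ≤ a < p, and for every integer n ≥ 1 and every digit a with 0 ≤ a < p one has the polynomial identity T_{pn+a}(x) = (a+1)·T_n(x) + (p−a−1)·x^{ν_p(n)+1}·T_{n−1}(x), where ν_p is the p-adic valuation. -/
open Finset

/-! Legendre's formula gives `ν_p((p m + c)!) = ν_p(m!) + m` for `c < p`. Write `t = p q + b` with
`b < p`. If `b ≤ a`, then `p n + a - t = p (n - q) + (a - b)` and `ν_p (binom (p n + a) t)` equals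
`ν_p (binom n q)`. If `b > a`, subtracting borrows from the next digit:
`p n + a - t = p (n - 1 - q) + (p + a - b)`, and the valuation becomes
`ν_p(n) + 1 + ν_p (binom (n - 1) q)`. There are `a + 1` digits `b` of the first kind and
`p - a - 1` of the second. -/

open Polynomial
open scoped Nat

lemma Finset.sum_range_mul_add_succ {M : Type*} [AddCommMonoid M] (f : ℕ → M) {p a : ℕ}
    (ha : a < p) (n : ℕ) :
    ∑ t ∈ range (p * n + a + 1), f t =
      ∑ q ∈ range (n + 1), ∑ b ∈ range (a + 1), f (p * q + b) +
        ∑ q ∈ range n, ∑ b ∈ Ico (a + 1) p, f (p * q + b) := by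
  have hmul : ∀ m, ∑ t ∈ range (p * m), f t = ∑ q ∈ range m, ∑ b ∈ range p, f (p * q + b) := by
    intro m
    induction m with
    | zero => simp
    | succ m ih => rw [Nat.mul_succ, sum_range_add, ih, sum_range_succ]
  have hsplit : ∀ q, ∑ b ∈ range p, f (p * q + b) =
      ∑ b ∈ range (a + 1), f (p * q + b) + ∑ b ∈ Ico (a + 1) p, f (p * q + b) := fun q =>
    (sum_range_add_sum_Ico _ ha).symm
  rw [sum_range_succ (fun q => ∑ b ∈ range (a + 1), f (p * q + b)), add_assoc, sum_range_add,
    hmul, sum_congr rfl fun q _ => hsplit q, sum_add_distrib]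
  abel

section Valuation

variable {p : ℕ} [Fact p.Prime]

lemma padicValNat_factorial_mul_add_of_lt (m : ℕ) {c : ℕ} (hc : c < p) :
    padicValNat p (p * m + c)! = padicValNat p m ! + m := by
  rw [padicValNat_factorial_mul_add m hc, padicValNat_factorial_mul]

lemma padicValNat_factorial_eq_choose_add {m k : ℕ} (h : k ≤ m) :
    padicValNat p m ! =
      padicValNat p (m.choose k) + padicValNat p k ! + padicValNat p (m - k)! := by
  have hchoose : m.choose k ≠ 0 := (Nat.choose_pos h).ne'
  rw [← Nat.choose_mul_factorial_mul_factorial h,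
    padicValNat.mul (Nat.mul_ne_zero hchoose (Nat.factorial_ne_zero _)) (Nat.factorial_ne_zero _),
    padicValNat.mul hchoose (Nat.factorial_ne_zero _)]

lemma padicValNat_choose_mul_add_of_le {n q a b : ℕ} (hq : q ≤ n) (hba : b ≤ a) (ha : a < p) :
    padicValNat p ((p * n + a).choose (p * q + b)) = padicValNat p (n.choose q) := by
  have hsub : p * n + a - (p * q + b) = p * (n - q) + (a - b) := by
    have : p * (n - q) + p * q = p * n := by rw [← Nat.mul_add, Nat.sub_add_cancel hq]
    omega
  have htop := padicValNat_factorial_eq_choose_add (p := p)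
    (show p * q + b ≤ p * n + a by nlinarith)
  rw [hsub, padicValNat_factorial_mul_add_of_lt n ha,
    padicValNat_factorial_mul_add_of_lt q (hba.trans_lt ha),
    padicValNat_factorial_mul_add_of_lt (n - q) (by omega)] at htop
  have hbot := padicValNat_factorial_eq_choose_add (p := p) hq
  omega

lemma padicValNat_choose_mul_add_of_lt {n q a b : ℕ} (hq : q < n) (hab : a < b) (hb : b < p) :
    padicValNat p ((p * n + a).choose (p * q + b)) =
      padicValNat p n + 1 + padicValNat p ((n - 1).choose q) := by
  have hsub : p * n + a - (p * q + b) = p * (n - 1 - q) + (p + a - b) := by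
    have : p * (n - 1 - q) + p * q + p = p * n := by
      rw [← Nat.mul_add, ← Nat.mul_succ]
      congr 1
      omega
    omega
  have htop := padicValNat_factorial_eq_choose_add (p := p)
    (show p * q + b ≤ p * n + a by nlinarith)
  rw [hsub, padicValNat_factorial_mul_add_of_lt n (hab.trans hb),
    padicValNat_factorial_mul_add_of_lt q hb,
    padicValNat_factorial_mul_add_of_lt (n - 1 - q) (by omega)] at htop
  have hbot := padicValNat_factorial_eq_choose_add (p := p) (Nat.le_sub_one_of_lt hq)
  have hn : padicValNat p n ! = padicValNat p n + padicValNat p (n - 1)! := by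
    rw [← Nat.mul_factorial_pred (by omega), padicValNat.mul (by omega) (Nat.factorial_ne_zero _)]
  omega

end Valuation

/-- The last sum is `T_{n-1}` for `n ≥ 1` and vanishes for `n = 0`. -/
lemma Tpoly_mul_add {p a : ℕ} [Fact p.Prime] (ha : a < p) (n : ℕ) :
    Tpoly p (p * n + a) =
      C ((a : ℤ) + 1) * Tpoly p n + C ((p : ℤ) - a - 1) * X ^ (padicValNat p n + 1) *
        ∑ q ∈ range n, X ^ padicValNat p ((n - 1).choose q) := by
  have hlow : ∀ q ∈ range (n + 1), ∑ b ∈ range (a + 1),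
      (X : ℤ[X]) ^ padicValNat p ((p * n + a).choose (p * q + b)) =
        (a + 1) • X ^ padicValNat p (n.choose q) := by
    intro q hq
    rw [sum_congr rfl fun b hb => by
      rw [padicValNat_choose_mul_add_of_le (Nat.lt_succ_iff.mp (mem_range.mp hq))
        (Nat.lt_succ_iff.mp (mem_range.mp hb)) ha], sum_const, card_range]
  have hhigh : ∀ q ∈ range n, ∑ b ∈ Ico (a + 1) p,
      (X : ℤ[X]) ^ padicValNat p ((p * n + a).choose (p * q + b)) =
        (p - (a + 1)) • (X ^ (padicValNat p n + 1) * X ^ padicValNat p ((n - 1).choose q)) := by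
    intro q hq
    rw [sum_congr rfl fun b hb => by
      rw [padicValNat_choose_mul_add_of_lt (mem_range.mp hq) (mem_Ico.mp hb).1 (mem_Ico.mp hb).2,
        pow_add], sum_const, Nat.card_Ico]
  rw [Tpoly, sum_range_mul_add_succ _ ha, sum_congr rfl hlow, sum_congr rfl hhigh, ← smul_sum,
    ← smul_sum, ← mul_sum, Tpoly, nsmul_eq_mul, nsmul_eq_mul, ← C_eq_natCast, ← C_eq_natCast,
    mul_assoc, Nat.cast_sub ha, Nat.cast_add, Nat.cast_one, sub_add_eq_sub_sub]

/-- the fundamental recurrence for the polynomials `T_n(x)`. -/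
theorem stmt2 (p : ℕ) (hp : p.Prime) :
    (∀ a : ℕ, a < p → Tpoly p a = Polynomial.C ((a : ℤ) + 1)) ∧
    ∀ n : ℕ, 1 ≤ n → ∀ a : ℕ, a < p →
      Tpoly p (p * n + a) =
        Polynomial.C ((a : ℤ) + 1) * Tpoly p n +
          Polynomial.C ((p : ℤ) - a - 1) * Polynomial.X ^ (padicValNat p n + 1) *
            Tpoly p (n - 1) := by
  have : Fact p.Prime := ⟨hp⟩
  refine ⟨fun a ha => ?_, fun n hn a ha => ?_⟩
  · simpa [Tpoly] using Tpoly_mul_add ha 0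
  · rw [Tpoly_mul_add ha n]
    simp only [Tpoly, Nat.sub_add_cancel hn]
end

section
/- Let p be a prime. Define θ̃_p(k,n) := θ_p((k−s_p(n))/(p−1), n) if k ≥ s_p(n) and (p−1) divides k−s_p(n), and θ̃_p(k,n) := 0 otherwise; moreover set θ̃_p(k,n) := 0 whenever k < 0 or n < 0. Then for all integers n ≥ 0, k ≥ 0 and all digits a with 0 ≤ a < p one has θ̃_p(k, pn+a) = (a+1)·θ̃_p(k−a, n) + (p−a−1)·θ̃_p(k−p−a, n−1). -/
open Finset

/-- `θ̃_p(k,n)` for integer arguments, zero when `k < 0` or `n < 0`. -/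
def thetaTilde (p : ℕ) (k n : ℤ) : ℕ :=
  if 0 ≤ k ∧ 0 ≤ n then
    if digitSum p n.toNat ≤ k.toNat ∧ (p - 1) ∣ (k.toNat - digitSum p n.toNat) then
      theta p ((k.toNat - digitSum p n.toNat) / (p - 1)) n.toNat
    else 0
  else 0

/-!
By Kummer's theorem, `(p - 1) ν_p (binom n t) = s_p(t) + s_p(n - t) - s_p(n)`, so `θ̃_p(k, n)`
counts the pairs `(u, v)` with `u + v = n` and `s_p(u) + s_p(v) = k`. Sort the pairs with
`u + v = p n + a` by the last digit `b` of `u`. If `b ≤ a`, then `v` ends in `a - b` and the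
remaining digits form a pair with sum `n`; if `b > a`, then `v` ends in `p + a - b` and the
remaining digits form a pair with sum `n - 1`. The `a + 1`, resp. `p - a - 1`, choices of `b` each
contribute `a`, resp. `p + a`, to the digit sum.
-/

section DigitPairs

variable {p : ℕ}

lemma digitSum_add_mul (hp : 1 < p) {b : ℕ} (hb : b < p) (q : ℕ) :
    digitSum p (b + p * q) = b + digitSum p q := by
  by_cases h : b = 0 ∧ q = 0
  · simp [h.1, h.2, digitSum]
  · rw [digitSum, Nat.digits_add p hp b q hb (by tauto), List.sum_cons, digitSum]

lemma digitSum_add_digitSum (hp : p.Prime) (u v : ℕ) :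
    digitSum p u + digitSum p v =
      digitSum p (u + v) + (p - 1) * padicValNat p ((u + v).choose u) := by
  have : Fact p.Prime := ⟨hp⟩
  have hchoose : (u + v).choose u * (u.factorial * v.factorial) = (u + v).factorial := by
    rw [← Nat.choose_mul_factorial_mul_factorial (Nat.le_add_right u v), Nat.add_sub_cancel_left,
      mul_assoc]
  have hval := congrArg (padicValNat p) hchoose
  rw [padicValNat.mul (Nat.choose_pos (Nat.le_add_right u v)).ne'
      (mul_ne_zero (Nat.factorial_ne_zero u) (Nat.factorial_ne_zero v)),
    padicValNat.mul (Nat.factorial_ne_zero u) (Nat.factorial_ne_zero v)] at hval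
  have hu := sub_one_mul_padicValNat_factorial (p := p) u
  have hv := sub_one_mul_padicValNat_factorial (p := p) v
  have huv := sub_one_mul_padicValNat_factorial (p := p) (u + v)
  have := Nat.digit_sum_le p u
  have := Nat.digit_sum_le p v
  have := Nat.digit_sum_le p (u + v)
  rw [← hval, mul_add, mul_add] at huv
  unfold digitSum
  omega

def digitPairs (p : ℕ) (k : ℤ) (m : ℕ) : Finset (ℕ × ℕ) :=
  {x ∈ antidiagonal m | ((digitSum p x.1 + digitSum p x.2 : ℕ) : ℤ) = k}

lemma card_digitPairs_eq_theta (hp : p.Prime) (j n : ℕ) :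
    #(digitPairs p ((digitSum p n + (p - 1) * j : ℕ) : ℤ) n) = theta p j n := by
  rw [digitPairs, theta, Nat.antidiagonal_eq_map, filter_map, card_map]
  congr 1
  refine filter_congr fun t ht => ?_
  have hkummer := digitSum_add_digitSum hp t (n - t)
  rw [Nat.add_sub_cancel' (Nat.lt_succ_iff.mp (mem_range.mp ht))] at hkummer
  change ((digitSum p t + digitSum p (n - t) : ℕ) : ℤ) = _ ↔ _
  rw [Nat.cast_inj, hkummer, Nat.add_left_cancel_iff]
  exact Nat.mul_left_cancel_iff (Nat.sub_pos_of_lt hp.one_lt)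

lemma thetaTilde_eq_card_digitPairs (hp : p.Prime) (k : ℤ) (n : ℕ) :
    thetaTilde p k n = #(digitPairs p k n) := by
  rcases lt_or_ge k 0 with hk | hk
  · rw [thetaTilde, if_neg (by omega), eq_comm, card_eq_zero, digitPairs, filter_eq_empty_iff]
    intro x _
    omega
  lift k to ℕ using hk
  rw [thetaTilde, if_pos ⟨by omega, by omega⟩, Int.toNat_natCast, Int.toNat_natCast]
  split_ifs with h
  · obtain ⟨hle, j, hj⟩ := h
    rw [hj, Nat.mul_div_cancel_left _ (Nat.sub_pos_of_lt hp.one_lt),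
      ← card_digitPairs_eq_theta hp, ← hj, Nat.add_sub_cancel' hle]
  · rw [eq_comm, card_eq_zero, digitPairs, filter_eq_empty_iff]
    rintro ⟨u, v⟩ huv hk
    rw [HasAntidiagonal.mem_antidiagonal] at huv
    dsimp only at huv hk
    have hkummer := digitSum_add_digitSum hp u v
    rw [huv] at hkummer
    rw [Nat.cast_inj] at hk
    exact h ⟨by omega, padicValNat p (n.choose u), by omega⟩

lemma thetaTilde_of_neg {k n : ℤ} (hn : n < 0) : thetaTilde p k n = 0 :=
  if_neg (by omega)

lemma mod_eq_and_div_add_div_eq (hp : 0 < p) {u v b c m : ℕ} (hc : c < p) (hu : u % p = b)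
    (huv : u + v = p * m + (b + c)) : v % p = c ∧ u / p + v / p = m := by
  have hsum : v % p + p * (u / p + v / p) = c + p * m := by
    have := Nat.mod_add_div u p
    have := Nat.mod_add_div v p
    rw [mul_add]
    omega
  have hunique := (Nat.div_mod_unique hp).mpr ⟨hsum, Nat.mod_lt v hp⟩
  rw [Nat.add_mul_div_left _ _ hp, Nat.div_eq_of_lt hc, zero_add, Nat.add_mul_mod_self_left,
    Nat.mod_eq_of_lt hc] at hunique
  exact ⟨hunique.2.symm, hunique.1.symm⟩

/-- Stripping the last digits `b` of `u` and `c` of `v` is a bijection onto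
`digitPairs p (k - d) m`. -/
lemma card_digitPairs_filter_mod (hp : 1 < p) {b c d : ℕ} (hb : b < p) (hc : c < p)
    (hd : b + c = d) (k : ℤ) (m : ℕ) :
    #{x ∈ digitPairs p k (p * m + d) | x.1 % p = b} = #(digitPairs p (k - d) m) := by
  subst hd
  have hp0 : 0 < p := by omega
  symm
  refine card_nbij' (fun y => (b + p * y.1, c + p * y.2)) (fun x => (x.1 / p, x.2 / p))
    ?_ ?_ ?_ ?_
  · rintro ⟨s, t⟩ hst
    simp only [mem_coe, mem_filter, digitPairs, HasAntidiagonal.mem_antidiagonal] at hst ⊢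
    rw [digitSum_add_mul hp hb, digitSum_add_mul hp hc, Nat.add_mul_mod_self_left,
      Nat.mod_eq_of_lt hb, ← hst.1]
    refine ⟨⟨by ring, ?_⟩, rfl⟩
    push_cast at hst ⊢
    linarith [hst.2]
  · rintro ⟨u, v⟩ huv
    simp only [mem_coe, mem_filter, digitPairs, HasAntidiagonal.mem_antidiagonal] at huv ⊢
    obtain ⟨hvc, hm⟩ := mod_eq_and_div_add_div_eq hp0 hc huv.2 huv.1.1
    refine ⟨hm, ?_⟩
    have hu := Nat.mod_add_div u p
    have hv := Nat.mod_add_div v p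
    rw [huv.2] at hu
    rw [hvc] at hv
    rw [← hu, ← hv, digitSum_add_mul hp hb, digitSum_add_mul hp hc] at huv
    push_cast at huv ⊢
    linarith [huv.1.2]
  · rintro ⟨s, t⟩ -
    simp only [Nat.add_mul_div_left _ _ hp0, Nat.div_eq_of_lt hb, Nat.div_eq_of_lt hc, zero_add]
  · rintro ⟨u, v⟩ huv
    simp only [mem_coe, mem_filter, digitPairs, HasAntidiagonal.mem_antidiagonal] at huv
    have hvc := (mod_eq_and_div_add_div_eq hp0 hc huv.2 huv.1.1).1
    simp only [Prod.mk.injEq]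
    rw [← huv.2, ← hvc, Nat.mod_add_div, Nat.mod_add_div]
    exact ⟨rfl, rfl⟩

lemma card_digitPairs_filter_mod_of_le (hp : p.Prime) {a b : ℕ} (hba : b ≤ a) (ha : a < p)
    (k : ℤ) (n : ℕ) :
    #{x ∈ digitPairs p k (p * n + a) | x.1 % p = b} = thetaTilde p (k - a) n := by
  rw [card_digitPairs_filter_mod hp.one_lt (by omega) (by omega : a - b < p)
    (Nat.add_sub_cancel' hba), thetaTilde_eq_card_digitPairs hp]

lemma card_digitPairs_filter_mod_of_lt (hp : p.Prime) {a b : ℕ} (hab : a < b) (hb : b < p)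
    (k : ℤ) (n : ℕ) :
    #{x ∈ digitPairs p k (p * n + a) | x.1 % p = b} = thetaTilde p (k - p - a) (n - 1) := by
  rcases n with _ | n
  · rw [Nat.cast_zero, zero_sub, thetaTilde_of_neg (by norm_num), card_eq_zero,
      filter_eq_empty_iff]
    rintro ⟨u, v⟩ huv hub
    simp only [digitPairs, mem_filter, HasAntidiagonal.mem_antidiagonal, mul_zero, zero_add] at huv
    rw [Nat.mod_eq_of_lt (by omega)] at hub
    omega
  · rw [show p * (n + 1) + a = p * n + (p + a) by ring,
      card_digitPairs_filter_mod hp.one_lt hb (by omega : p + a - b < p) (by omega),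
      Nat.cast_succ, add_sub_cancel_right, thetaTilde_eq_card_digitPairs hp, Nat.cast_add,
      sub_add_eq_sub_sub]

end DigitPairs

/-- the simplified recurrence for `θ̃_p`. -/
theorem stmt3 (p : ℕ) (hp : p.Prime) (n k a : ℕ) (ha : a < p) :
    thetaTilde p (k : ℤ) ((p * n + a : ℕ) : ℤ) =
      (a + 1) * thetaTilde p ((k : ℤ) - a) (n : ℤ) +
        (p - a - 1) * thetaTilde p ((k : ℤ) - p - a) ((n : ℤ) - 1) := by
  rw [thetaTilde_eq_card_digitPairs hp,
    card_eq_sum_card_fiberwise (f := fun x => x.1 % p) (t := range p)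
      fun x _ => mem_range.mpr (Nat.mod_lt _ hp.pos),
    ← sum_range_add_sum_Ico _ (by omega : a + 1 ≤ p),
    sum_congr rfl fun b hb => card_digitPairs_filter_mod_of_le hp
      (Nat.lt_succ_iff.mp (mem_range.mp hb)) ha k n,
    sum_congr rfl fun b hb => card_digitPairs_filter_mod_of_lt hp
      (mem_Ico.mp hb).1 (mem_Ico.mp hb).2 k n,
    sum_const, sum_const, card_range, Nat.card_Ico, smul_eq_mul, smul_eq_mul, Nat.sub_sub]
end

section
/- Let p be a prime and n ≥ 1 an integer, and write n = c·p^λ + m with λ ≥ 0, 1 ≤ c ≤ p−1 and 0 ≤ m < p^λ (so that c is the leading base-p digit of n). Then the degree of the polynomial T_n(x) equals λ − ν_p(m+1); equivalently, max_{0≤t≤n} ν_p(binom(n,t)) = λ − ν_p(m+1). -/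
open Finset

/-!
Kummer's theorem counts `ν_p (binom n t)` as the number of positions `i ≤ λ` at which adding
`t` and `n - t` in base `p` carries into digit `i`. Write `s = ν_p (m + 1)`. For `i ≤ s` we have
`p^i ∣ n + 1`, so the residues of `t` and `n - t` modulo `p^i` add up to `p^i - 1` and no carry
occurs there: at most `λ - s` carries. For `t = m + 1` we get `n - t = c p^λ - 1 ≡ -1 (mod p^i)`
for every `i ≤ λ`, while `p^i ∤ m + 1` for `i > s`: a carry at each `i ∈ (s, λ]`. Finally, over
`ℤ` the coefficients of `Σ_t x^{f t}` are counts, which cannot cancel, so `deg T_n = max_t f t`.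
-/

namespace Nat

theorem mod_eq_sub_one_of_dvd_add_one {a q : ℕ} (h : q ∣ a + 1) : a % q = q - 1 := by
  obtain ⟨k, hk⟩ := h
  have hqk_pos : 0 < q * k := hk ▸ Nat.succ_pos a
  have hq : 0 < q := Nat.pos_of_mul_pos_right hqk_pos
  have hqk : q ≤ q * k := Nat.le_mul_of_pos_right q (Nat.pos_of_mul_pos_left hqk_pos)
  have ha : a = q * (k - 1) + (q - 1) := by rw [Nat.mul_sub_one]; omega
  rw [ha, Nat.mul_add_mod, Nat.mod_eq_of_lt (by omega)]

theorem mod_add_mod_lt_of_dvd_add_add_one {a b q : ℕ} (h : q ∣ a + b + 1) :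
    a % q + b % q < q := by
  have hq : 0 < q := Nat.pos_of_dvd_of_pos h (a + b).succ_pos
  by_contra hcarry
  have hsum := Nat.add_mod_add_of_le_add_mod (not_lt.mp hcarry)
  rw [mod_eq_sub_one_of_dvd_add_one h] at hsum
  have := Nat.mod_lt a hq
  have := Nat.mod_lt b hq
  omega

theorem le_mod_add_mod_of_dvd_add_one_of_not_dvd {a b q : ℕ} (hb : q ∣ b + 1) (ha : ¬q ∣ a) :
    q ≤ a % q + b % q := by
  have hq : 0 < q := Nat.pos_of_dvd_of_pos hb b.succ_pos
  have : a % q ≠ 0 := fun h => ha (Nat.dvd_of_mod_eq_zero h)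
  rw [mod_eq_sub_one_of_dvd_add_one hb]
  omega

end Nat

namespace Polynomial

theorem coeff_sum_X_pow {R ι : Type*} [Semiring R] (s : Finset ι) (f : ι → ℕ) (k : ℕ) :
    (∑ t ∈ s, (X : R[X]) ^ f t).coeff k = #{t ∈ s | f t = k} := by
  simp only [finsetSum_coeff, coeff_X_pow, eq_comm (a := k), Finset.sum_boole]

theorem natDegree_sum_X_pow {R ι : Type*} [Semiring R] [CharZero R] (s : Finset ι) (f : ι → ℕ) :
    (∑ t ∈ s, (X : R[X]) ^ f t).natDegree = s.sup f := by
  refine le_antisymm (natDegree_sum_le_of_forall_le _ _ fun t ht => ?_) ?_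
  · exact (natDegree_X_pow_le _).trans (Finset.le_sup ht)
  rcases s.eq_empty_or_nonempty with rfl | hs
  · simp
  obtain ⟨t, ht, hmax⟩ := Finset.exists_mem_eq_sup s hs f
  refine le_natDegree_of_ne_zero ?_
  rw [coeff_sum_X_pow, Nat.cast_ne_zero, ← Nat.pos_iff_ne_zero, Finset.card_pos]
  exact ⟨t, Finset.mem_filter.mpr ⟨ht, hmax.symm⟩⟩

end Polynomial

section LeadingDigit

variable {p n c l m : ℕ} [Fact p.Prime]

theorem lt_pow_succ_of_eq_mul_pow_add (hn : n = c * p ^ l + m) (hc : c ≤ p - 1)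
    (hm : m < p ^ l) : n < p ^ (l + 1) := by
  have : c * p ^ l + p ^ l ≤ p * p ^ l := by
    rw [← Nat.succ_mul]
    exact Nat.mul_le_mul_right _ (by have := (Fact.out : p.Prime).pos; omega)
  rw [pow_succ']
  omega

theorem padicValNat_choose_le_of_eq_mul_pow_add {t : ℕ} (hn : n = c * p ^ l + m)
    (hc : c ≤ p - 1) (hm : m < p ^ l) (ht : t ≤ n) :
    padicValNat p (n.choose t) ≤ l - padicValNat p (m + 1) := by
  rw [padicValNat_choose ht (Nat.log_lt_of_lt_pow' l.succ_ne_zero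
    (lt_pow_succ_of_eq_mul_pow_add hn hc hm))]
  calc #{i ∈ Finset.Ico 1 (l + 1) | p ^ i ≤ t % p ^ i + (n - t) % p ^ i}
      ≤ #(Finset.Ico (padicValNat p (m + 1) + 1) (l + 1)) := by
        refine Finset.card_le_card fun i hi => ?_
        simp only [Finset.mem_filter, Finset.mem_Ico] at hi ⊢
        refine ⟨not_lt.mp fun hi_le => hi.2.not_gt ?_, hi.1.2⟩
        have hdvd : p ^ i ∣ n + 1 := by
          rw [hn, add_assoc]
          exact dvd_add (dvd_mul_of_dvd_right (pow_dvd_pow p (by omega)) c)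
            ((pow_dvd_pow p (by omega)).trans pow_padicValNat_dvd)
        exact Nat.mod_add_mod_lt_of_dvd_add_add_one (by rwa [Nat.add_sub_cancel' ht])
    _ = l - padicValNat p (m + 1) := by simp

theorem le_padicValNat_choose_succ_of_eq_mul_pow_add (hn : n = c * p ^ l + m) (hc₁ : 1 ≤ c)
    (hc₂ : c ≤ p - 1) (hm : m < p ^ l) :
    l - padicValNat p (m + 1) ≤ padicValNat p (n.choose (m + 1)) := by
  have hpl : p ^ l ≤ c * p ^ l := Nat.le_mul_of_pos_left _ hc₁
  rw [padicValNat_choose (by omega) (Nat.log_lt_of_lt_pow' l.succ_ne_zero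
    (lt_pow_succ_of_eq_mul_pow_add hn hc₂ hm))]
  calc l - padicValNat p (m + 1)
      = #(Finset.Ico (padicValNat p (m + 1) + 1) (l + 1)) := by simp
    _ ≤ #{i ∈ Finset.Ico 1 (l + 1) | p ^ i ≤ (m + 1) % p ^ i + (n - (m + 1)) % p ^ i} := by
        refine Finset.card_le_card fun i hi => ?_
        simp only [Finset.mem_filter, Finset.mem_Ico] at hi ⊢
        refine ⟨⟨by omega, hi.2⟩, Nat.le_mod_add_mod_of_dvd_add_one_of_not_dvd ?_ ?_⟩
        · rw [show n - (m + 1) + 1 = c * p ^ l by omega]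
          exact dvd_mul_of_dvd_right (pow_dvd_pow p (by omega)) c
        · rw [padicValNat_dvd_iff_le (by omega : m + 1 ≠ 0)]
          omega

theorem sup_padicValNat_choose_of_eq_mul_pow_add (hn : n = c * p ^ l + m) (hc₁ : 1 ≤ c)
    (hc₂ : c ≤ p - 1) (hm : m < p ^ l) :
    (Finset.range (n + 1)).sup (fun t => padicValNat p (n.choose t)) =
      l - padicValNat p (m + 1) := by
  refine le_antisymm (Finset.sup_le fun t ht => ?_) ?_
  · exact padicValNat_choose_le_of_eq_mul_pow_add hn hc₂ hm (Nat.lt_succ_iff.mp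
      (Finset.mem_range.mp ht))
  · refine (le_padicValNat_choose_succ_of_eq_mul_pow_add hn hc₁ hc₂ hm).trans
      (Finset.le_sup (f := fun t => padicValNat p (n.choose t)) (Finset.mem_range.mpr ?_))
    have : p ^ l ≤ c * p ^ l := Nat.le_mul_of_pos_left _ hc₁
    omega

end LeadingDigit

theorem stmt4_general (p n c l m : ℕ) (hp : p.Prime)
    (hn : n = c * p ^ l + m) (hc1 : 1 ≤ c) (hc2 : c ≤ p - 1) (hm : m < p ^ l) :
    (Tpoly p n).natDegree = l - padicValNat p (m + 1) ∧
    (Finset.range (n + 1)).sup (fun t => padicValNat p (n.choose t)) =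
      l - padicValNat p (m + 1) := by
  have : Fact p.Prime := ⟨hp⟩
  have hsup := sup_padicValNat_choose_of_eq_mul_pow_add hn hc1 hc2 hm
  exact ⟨by rw [Tpoly, Polynomial.natDegree_sum_X_pow, hsup], hsup⟩

/-- the degree of `T_n(x)` equals `λ − ν_p(m+1)` where `n = c·p^λ + m`,
`1 ≤ c ≤ p−1`, `0 ≤ m < p^λ`; equivalently `max_{0≤t≤n} ν_p(binom n t) = λ − ν_p(m+1)`. -/
theorem stmt4 (p n c l m : ℕ) (hp : p.Prime) (hn1 : 1 ≤ n)
    (hn : n = c * p ^ l + m) (hc1 : 1 ≤ c) (hc2 : c ≤ p - 1) (hm : m < p ^ l) :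
    (Tpoly p n).natDegree = l - padicValNat p (m + 1) ∧
    (Finset.range (n + 1)).sup (fun t => padicValNat p (n.choose t)) =
      l - padicValNat p (m + 1) :=
  stmt4_general p n c l m hp hn hc1 hc2 hm
end

section
/- Let p be a prime, let n be a nonnegative integer and μ ≥ 1 an integer with n < p^μ, and let n = Σ_{i=0}^{μ−1} n_i p^i with digits 0 ≤ n_i < p. Then θ_p(1,n) = Σ_{i=0}^{μ−2} (n_{μ−1}+1)⋯(n_{i+2}+1) · n_{i+1} · (p−n_i−1) · (n_{i−1}+1)⋯(n_0+1), where the products over an empty index range are 1. Consequently θ_p(1,n)/θ_p(0,n) = Σ_{c=1}^{p−1} Σ_{a=0}^{p−2} (c/(c+1))·((p−a−1)/(a+1))·|n|_{ca}, where ca denotes the two-letter word with leftmost letter c and rightmost letter a. -/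
open Finset

/-!
By Kummer's theorem, `ν_p (n.choose t)` is the number of borrows in the base-`p` subtraction
`n - t`, and this subtraction borrows from position `l` exactly when `n % p ^ l < t % p ^ l`.
It borrows from position `l + 1` iff `n_l < t_l`, or `n_l = t_l` and it borrows from position
`l`, so the set of borrows is determined digit by digit. Hence the `t ≤ n` without borrows are
those with `t_l ≤ n_l` for all `l` (Fine's formula), and those whose only borrow is from
position `i + 1` are those with `t_i > n_i`, `t_{i+1} < n_{i+1}` and `t_l ≤ n_l` elsewhere: a box
of digit vectors whose size is the `i`-th summand. Divided by `θ_p(0,n)`, that summand becomes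
`n_{i+1}/(n_{i+1}+1) · (p-n_i-1)/(n_i+1)`, which depends only on the two-letter factor
`n_{i+1} n_i` of `n`; grouping the positions `i` by this factor gives the sum over words.
-/

section Digits

variable {p : ℕ}

lemma digit_lt (hp : p ≠ 0) (n i : ℕ) : digit p n i < p := Nat.mod_lt _ (Nat.pos_of_ne_zero hp)

lemma digit_eq_zero_of_lt_pow {n i : ℕ} (h : n < p ^ i) : digit p n i = 0 := by
  simp [digit, Nat.div_eq_of_lt h]

lemma digit_zero (n : ℕ) : digit p n 0 = n % p := by
  simp [digit]

lemma digit_div (n l : ℕ) : digit p (n / p) l = digit p n (l + 1) := by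
  rw [digit, digit, Nat.div_div_eq_div_mul, pow_succ']

lemma mod_pow_succ (n l : ℕ) : n % p ^ (l + 1) = digit p n l * p ^ l + n % p ^ l := by
  rw [pow_succ, Nat.mod_mul, digit]
  ring

lemma mul_add_lt_mul_add_iff {a b r s m : ℕ} (hr : r < m) (hs : s < m) :
    a * m + r < b * m + s ↔ a < b ∨ a = b ∧ r < s := by
  rcases lt_trichotomy a b with h | rfl | h
  · have : (a + 1) * m ≤ b * m := Nat.mul_le_mul_right m h
    simp only [h, true_or, iff_true]
    nlinarith
  · simp
  · have : (b + 1) * m ≤ a * m := Nat.mul_le_mul_right m h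
    simp only [h.ne', h.not_gt, false_or, false_and, iff_false, not_lt]
    nlinarith

lemma mod_pow_succ_lt_mod_pow_succ_iff (hp : p ≠ 0) (n t l : ℕ) :
    n % p ^ (l + 1) < t % p ^ (l + 1) ↔
      digit p n l < digit p t l ∨ digit p n l = digit p t l ∧ n % p ^ l < t % p ^ l := by
  have hpl : 0 < p ^ l := pow_pos (Nat.pos_of_ne_zero hp) l
  rw [mod_pow_succ, mod_pow_succ]
  exact mul_add_lt_mul_add_iff (Nat.mod_lt n hpl) (Nat.mod_lt t hpl)

lemma forall_mod_pow_lt_mod_pow_iff (hp : p ≠ 0) {n t : ℕ} {S : ℕ → Prop} (hS : ¬ S 0) :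
    (∀ l, n % p ^ l < t % p ^ l ↔ S l) ↔
      ∀ l, (S (l + 1) ↔ digit p n l < digit p t l ∨ digit p n l = digit p t l ∧ S l) := by
  refine ⟨fun h l => ?_, fun h l => ?_⟩
  · rw [← h, ← h, mod_pow_succ_lt_mod_pow_succ_iff hp]
  · induction l with
    | zero => simp [Nat.mod_one, hS]
    | succ l ih => rw [h, mod_pow_succ_lt_mod_pow_succ_iff hp, ih]

lemma mod_pow_lt_mod_pow_iff_of_le (hp : p ≠ 0) {n t μ l : ℕ} (hn : n < p ^ μ) (ht : t < p ^ μ)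
    (hl : μ ≤ l) : n % p ^ l < t % p ^ l ↔ n < t := by
  have hμl : p ^ μ ≤ p ^ l := Nat.pow_le_pow_right (Nat.pos_of_ne_zero hp) hl
  rw [Nat.mod_eq_of_lt (hn.trans_le hμl), Nat.mod_eq_of_lt (ht.trans_le hμl)]

lemma card_filter_range_pow_succ (hp : p ≠ 0) (μ : ℕ) (P Q : ℕ → Prop) [DecidablePred P]
    [DecidablePred Q] :
    #{t ∈ range (p ^ (μ + 1)) | P (t / p) ∧ Q (t % p)} =
      #{u ∈ range (p ^ μ) | P u} * #{d ∈ range p | Q d} := by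
  have hp' : 0 < p := Nat.pos_of_ne_zero hp
  rw [← card_product]
  refine card_nbij' (fun t => (t / p, t % p)) (fun q => q.2 + p * q.1) ?_ ?_ ?_ ?_
  · intro t ht
    simp only [mem_coe, mem_filter, mem_product, mem_range] at ht ⊢
    refine ⟨⟨?_, ht.2.1⟩, Nat.mod_lt t hp', ht.2.2⟩
    rw [Nat.div_lt_iff_lt_mul hp', ← pow_succ]
    exact ht.1
  · rintro ⟨u, d⟩ hq
    simp only [mem_coe, mem_filter, mem_product, mem_range] at hq ⊢
    rw [Nat.add_mul_div_left _ _ hp', Nat.div_eq_of_lt hq.2.1, zero_add,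
      Nat.add_mul_mod_self_left, Nat.mod_eq_of_lt hq.2.1]
    refine ⟨?_, hq.1.2, hq.2.2⟩
    calc d + p * u < p * (u + 1) := by linarith [hq.2.1]
      _ ≤ p * p ^ μ := Nat.mul_le_mul_left p hq.1.1
      _ = p ^ (μ + 1) := (pow_succ' p μ).symm
  · intro t _
    exact Nat.mod_add_div t p
  · rintro ⟨u, d⟩ hq
    simp only [mem_coe, mem_filter, mem_product, mem_range] at hq
    simp [Nat.add_mul_div_left _ _ hp', Nat.div_eq_of_lt hq.2.1, Nat.mod_eq_of_lt hq.2.1]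

lemma card_filter_forall_digit_mem (hp : p ≠ 0) (μ : ℕ) (A : ℕ → Finset ℕ)
    (hA : ∀ l, A l ⊆ range p) :
    #{t ∈ range (p ^ μ) | ∀ l < μ, digit p t l ∈ A l} = ∏ l ∈ range μ, #(A l) := by
  induction μ generalizing A with
  | zero => simp
  | succ μ ih =>
    have hsplit : ∀ t ∈ range (p ^ (μ + 1)), (∀ l < μ + 1, digit p t l ∈ A l) ↔
        (∀ l < μ, digit p (t / p) l ∈ A (l + 1)) ∧ t % p ∈ A 0 := by
      intro t _
      simp only [Nat.forall_lt_succ_left, digit_zero, digit_div]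
      exact and_comm
    rw [filter_congr hsplit, card_filter_range_pow_succ hp μ
      (fun u => ∀ l < μ, digit p u l ∈ A (l + 1)) (· ∈ A 0), ih _ fun l => hA (l + 1),
      filter_mem_eq_inter, inter_eq_right.2 (hA 0), prod_range_succ']

end Digits

section Borrows

variable {p : ℕ}

lemma le_mod_add_mod_sub_iff {m t n : ℕ} (hm : 0 < m) (ht : t ≤ n) :
    m ≤ t % m + (n - t) % m ↔ n % m < t % m := by
  have h := Nat.add_mod_add_ite t (n - t) m
  rw [Nat.add_sub_cancel' ht] at h
  have := Nat.mod_lt (n - t) hm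
  split_ifs at h <;> omega

lemma padicValNat_choose_eq_card_mod_lt (hp : p.Prime) {n t μ : ℕ} (ht : t ≤ n)
    (hn : n < p ^ μ) : padicValNat p (n.choose t) = #{l ∈ Ico 1 μ | n % p ^ l < t % p ^ l} := by
  have : Fact p.Prime := ⟨hp⟩
  rcases Nat.eq_zero_or_pos n with rfl | hn0
  · simp [Nat.le_zero.1 ht]
  rw [padicValNat_choose ht (Nat.log_lt_of_lt_pow hn0.ne' hn)]
  exact congrArg card <| filter_congr fun l _ => le_mod_add_mod_sub_iff (pow_pos hp.pos l) ht

lemma theta_eq_card_filter (hp : p.Prime) {n μ : ℕ} (hn : n < p ^ μ) (j : ℕ) :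
    theta p j n =
      #{t ∈ range (p ^ μ) | t ≤ n ∧ #{l ∈ Ico 1 μ | n % p ^ l < t % p ^ l} = j} := by
  rw [theta]
  congr 1
  ext t
  simp only [mem_filter, mem_range]
  constructor
  · rintro ⟨ht, hj⟩
    have htn : t ≤ n := by omega
    exact ⟨by omega, htn, padicValNat_choose_eq_card_mod_lt hp htn hn ▸ hj⟩
  · rintro ⟨-, ht, hj⟩
    exact ⟨by omega, padicValNat_choose_eq_card_mod_lt hp ht hn ▸ hj⟩

lemma le_and_filter_mod_lt_eq_iff (hp : p ≠ 0) {n t μ : ℕ} (hn : n < p ^ μ) (ht : t < p ^ μ)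
    {S : Finset ℕ} (hS : S ⊆ Ico 1 μ) :
    t ≤ n ∧ {l ∈ Ico 1 μ | n % p ^ l < t % p ^ l} = S ↔
      ∀ l, n % p ^ l < t % p ^ l ↔ l ∈ S := by
  have hout : ∀ l ∉ Ico 1 μ, t ≤ n → ¬ n % p ^ l < t % p ^ l := by
    intro l hl htn
    rcases Nat.eq_zero_or_pos l with rfl | hl0
    · simp [Nat.mod_one]
    · rw [mod_pow_lt_mod_pow_iff_of_le hp hn ht (by simp at hl; omega)]
      omega
  constructor
  · rintro ⟨htn, rfl⟩ l
    by_cases hl : l ∈ Ico 1 μ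
    · simp [hl]
    · simp [hl, hout l hl htn]
  · intro h
    have htn : t ≤ n := by
      have : μ ∉ S := fun hμ => by simpa using hS hμ
      rw [← h, mod_pow_lt_mod_pow_iff_of_le hp hn ht le_rfl] at this
      omega
    refine ⟨htn, ?_⟩
    ext l
    rw [mem_filter, h]
    exact ⟨And.right, fun hl => ⟨hS hl, hl⟩⟩

theorem theta_zero_eq_prod (hp : p.Prime) {n μ : ℕ} (hn : n < p ^ μ) :
    theta p 0 n = ∏ l ∈ range μ, (digit p n l + 1) := by
  have hp0 := hp.ne_zero
  have hbox : ∀ t ∈ range (p ^ μ), (t ≤ n ∧ #{l ∈ Ico 1 μ | n % p ^ l < t % p ^ l} = 0) ↔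
      ∀ l < μ, digit p t l ∈ Iic (digit p n l) := by
    intro t ht
    rw [mem_range] at ht
    rw [card_eq_zero, le_and_filter_mod_lt_eq_iff hp0 hn ht (empty_subset _),
      forall_mod_pow_lt_mod_pow_iff hp0 (S := (· ∈ (∅ : Finset ℕ))) (notMem_empty 0)]
    simp only [notMem_empty, false_iff, and_false, or_false, not_lt, mem_Iic]
    refine ⟨fun h l _ => h l, fun h l => ?_⟩
    rcases lt_or_ge l μ with hl | hl
    · exact h l hl
    · rw [digit_eq_zero_of_lt_pow (ht.trans_le (Nat.pow_le_pow_right hp.pos hl))]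
      exact Nat.zero_le _
  rw [theta_eq_card_filter hp hn, filter_congr hbox,
    card_filter_forall_digit_mem hp0 μ _
      fun l d hd => mem_range.2 ((mem_Iic.1 hd).trans_lt (digit_lt hp0 n l))]
  simp

lemma prod_range_eq_prod_Ico_mul_mul_mul {M : Type*} [CommMonoid M] (f : ℕ → M) {i μ : ℕ}
    (h : i + 2 ≤ μ) :
    ∏ l ∈ range μ, f l = (∏ l ∈ Ico (i + 2) μ, f l) * f (i + 1) * f i * ∏ l ∈ range i, f l := by
  rw [← prod_range_mul_prod_Ico f h, prod_range_succ, prod_range_succ]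
  ac_rfl

/-- The possible digits at position `l` of a `t` for which the base-`p` subtraction `n - t`
borrows only from position `i + 1`. -/
def singleBorrowDigits (p n i l : ℕ) : Finset ℕ :=
  if l = i then Ico (digit p n i + 1) p
  else if l = i + 1 then range (digit p n (i + 1))
  else Iic (digit p n l)

section SingleBorrow

variable {p : ℕ}

lemma singleBorrowDigits_subset_range (hp : p ≠ 0) (n i l : ℕ) :
    singleBorrowDigits p n i l ⊆ range p := by
  intro d hd
  have := digit_lt hp n l
  unfold singleBorrowDigits at hd
  split_ifs at hd with h1 h2 <;> simp at hd <;> subst_vars <;> simp <;> omega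

lemma mem_singleBorrowDigits_iff {n i l d : ℕ} (hd : d < p) :
    d ∈ singleBorrowDigits p n i l ↔ (l = i ↔ digit p n l < d ∨ digit p n l = d ∧ l = i + 1) := by
  unfold singleBorrowDigits
  split_ifs with h1 h2 <;> simp <;> subst_vars <;> omega

lemma forall_mod_pow_lt_mod_pow_iff_eq_succ (hp : p ≠ 0) {n t μ i : ℕ} (hn : n < p ^ μ)
    (ht : t < p ^ μ) (hi : i + 1 < μ) :
    (∀ l, n % p ^ l < t % p ^ l ↔ l = i + 1) ↔
      ∀ l < μ, digit p t l ∈ singleBorrowDigits p n i l := by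
  rw [forall_mod_pow_lt_mod_pow_iff hp (S := (· = i + 1)) (by omega)]
  simp only [Nat.add_right_cancel_iff]
  refine ⟨fun h l _ => (mem_singleBorrowDigits_iff (digit_lt hp t l)).2 (h l), fun h l => ?_⟩
  rcases lt_or_ge l μ with hl | hl
  · exact (mem_singleBorrowDigits_iff (digit_lt hp t l)).1 (h l hl)
  · have hμl := Nat.pow_le_pow_right (Nat.pos_of_ne_zero hp) hl
    rw [digit_eq_zero_of_lt_pow (hn.trans_le hμl), digit_eq_zero_of_lt_pow (ht.trans_le hμl)]
    omega

lemma prod_card_singleBorrowDigits {n i μ : ℕ} (hi : i + 1 < μ) :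
    ∏ l ∈ range μ, #(singleBorrowDigits p n i l) =
      (∏ l ∈ Ico (i + 2) μ, (digit p n l + 1)) * digit p n (i + 1) *
        (p - digit p n i - 1) * ∏ l ∈ range i, (digit p n l + 1) := by
  have hIic : ∀ l, l ≠ i → l ≠ i + 1 → #(singleBorrowDigits p n i l) = digit p n l + 1 := by
    intro l h1 h2
    simp [singleBorrowDigits, h1, h2]
  have hi1 : #(singleBorrowDigits p n i (i + 1)) = digit p n (i + 1) := by
    simp [singleBorrowDigits]
  have hi0 : #(singleBorrowDigits p n i i) = p - digit p n i - 1 := by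
    simp [singleBorrowDigits, Nat.sub_sub]
  rw [prod_range_eq_prod_Ico_mul_mul_mul _ (by omega : i + 2 ≤ μ), hi1, hi0,
    prod_congr rfl fun l hl => hIic l (by simp at hl; omega) (by simp at hl; omega),
    prod_congr rfl fun l hl => hIic l (by simp at hl; omega) (by simp at hl; omega)]

open Classical in
lemma filter_card_mod_lt_eq_one_eq_biUnion (hp : p ≠ 0) {n μ : ℕ} (hn : n < p ^ μ) :
    {t ∈ range (p ^ μ) | t ≤ n ∧ #{l ∈ Ico 1 μ | n % p ^ l < t % p ^ l} = 1} =
      (range (μ - 1)).biUnion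
        fun i => {t ∈ range (p ^ μ) | ∀ l, n % p ^ l < t % p ^ l ↔ l = i + 1} := by
  ext t
  simp only [mem_filter, mem_biUnion, mem_range, card_eq_one]
  constructor
  · rintro ⟨ht, htn, j, hj⟩
    have hjμ : j ∈ Ico 1 μ := (mem_filter.1 (hj ▸ mem_singleton_self j)).1
    have hB := (le_and_filter_mod_lt_eq_iff hp hn ht (singleton_subset_iff.2 hjμ)).1 ⟨htn, hj⟩
    obtain ⟨hj1, hjμ⟩ := mem_Ico.1 hjμ
    refine ⟨j - 1, by omega, ht, fun l => ?_⟩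
    rw [hB l, mem_singleton]
    omega
  · rintro ⟨i, hi, ht, hB⟩
    have hS : {i + 1} ⊆ Ico 1 μ := singleton_subset_iff.2 (mem_Ico.2 ⟨by omega, by omega⟩)
    obtain ⟨htn, hF⟩ := (le_and_filter_mod_lt_eq_iff hp hn ht hS).2 (by simpa using hB)
    exact ⟨ht, htn, i + 1, hF⟩

theorem theta_one_eq_sum (hp : p.Prime) {n μ : ℕ} (hn : n < p ^ μ) :
    theta p 1 n = ∑ i ∈ range (μ - 1),
      (∏ l ∈ Ico (i + 2) μ, (digit p n l + 1)) * digit p n (i + 1) *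
        (p - digit p n i - 1) * ∏ l ∈ range i, (digit p n l + 1) := by
  classical
  have hp0 := hp.ne_zero
  have hdisj : (range (μ - 1) : Set ℕ).PairwiseDisjoint
      fun i => {t ∈ range (p ^ μ) | ∀ l, n % p ^ l < t % p ^ l ↔ l = i + 1} := by
    intro i _ i' _ hii'
    refine disjoint_left.2 fun t hti hti' => hii' ?_
    have := ((mem_filter.1 hti').2 (i + 1)).1 (((mem_filter.1 hti).2 (i + 1)).2 rfl)
    omega
  rw [theta_eq_card_filter hp hn, filter_card_mod_lt_eq_one_eq_biUnion hp0 hn,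
    card_biUnion hdisj]
  refine sum_congr rfl fun i hi => ?_
  have hi' : i + 1 < μ := by simp at hi; omega
  rw [filter_congr fun t ht => forall_mod_pow_lt_mod_pow_iff_eq_succ hp0 hn (mem_range.1 ht) hi',
    card_filter_forall_digit_mem hp0 μ _ (singleBorrowDigits_subset_range hp0 n i),
    prod_card_singleBorrowDigits hi']

end SingleBorrow

lemma sum_sum_mul_card_filter {α β ι R : Type*} [DecidableEq α] [DecidableEq β]
    [NonAssocSemiring R] (C : Finset α) (A : Finset β) (I : Finset ι) (f : α → β → R)
    (g : ι → β) (h : ι → α) :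
    ∑ c ∈ C, ∑ a ∈ A, f c a * #{i ∈ I | g i = a ∧ h i = c} =
      ∑ i ∈ I, if h i ∈ C ∧ g i ∈ A then f (h i) (g i) else 0 := by
  simp only [card_filter, Nat.cast_sum, Nat.cast_ite, Nat.cast_one, Nat.cast_zero, mul_sum,
    mul_ite, mul_one, mul_zero]
  rw [sum_congr rfl fun c _ => sum_comm, sum_comm]
  refine sum_congr rfl fun i _ => ?_
  simp only [ite_and, sum_ite_eq]
  split_ifs <;> simp [*]

section WordCount

variable {p : ℕ}

lemma wordCount_pair_eq_card (hp : p ≠ 0) {n μ a c : ℕ} (hn : n < p ^ μ) (hc : c ≠ 0) :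
    wordCount p [a, c] n = #{i ∈ range (μ - 1) | digit p n i = a ∧ digit p n (i + 1) = c} := by
  rw [wordCount, ← Set.ncard_coe_finset]
  congr 1
  ext i
  simp only [List.length_cons, List.length_nil, Set.mem_ofPred_eq, coe_filter, mem_range]
  constructor
  · intro h
    have ha : digit p n i = a := by simpa using h 0 (by omega)
    have hc' : digit p n (i + 1) = c := by simpa using h 1 (by omega)
    refine ⟨?_, ha, hc'⟩
    by_contra hiμ
    apply hc
    rw [← hc', digit_eq_zero_of_lt_pow
      (hn.trans_le (Nat.pow_le_pow_right (Nat.pos_of_ne_zero hp) (by omega)))]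
  · rintro ⟨-, ha, hc'⟩ k hk
    interval_cases k <;> simpa

end WordCount

theorem theta_one_div_theta_zero_eq_sum {p : ℕ} (hp : p.Prime) {n μ : ℕ} (hn : n < p ^ μ) :
    (theta p 1 n : ℚ) / theta p 0 n = ∑ i ∈ range (μ - 1),
      (digit p n (i + 1) : ℚ) / (digit p n (i + 1) + 1) *
        ((p - digit p n i - 1) / (digit p n i + 1)) := by
  rw [theta_one_eq_sum hp hn, theta_zero_eq_prod hp hn, Nat.cast_sum, sum_div]
  refine sum_congr rfl fun i hi => ?_
  have hi' : i + 2 ≤ μ := by simp at hi; omega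
  have hdi := digit_lt hp.ne_zero n i
  rw [prod_range_eq_prod_Ico_mul_mul_mul _ hi']
  push_cast [Nat.sub_sub, Nat.cast_sub (show digit p n i + 1 ≤ p by omega)]
  have hA : (∏ l ∈ range i, ((digit p n l : ℚ) + 1)) ≠ 0 :=
    prod_ne_zero_iff.2 fun l _ => by positivity
  have hB : (∏ l ∈ Ico (i + 2) μ, ((digit p n l : ℚ) + 1)) ≠ 0 :=
    prod_ne_zero_iff.2 fun l _ => by positivity
  field_simp
  ring

theorem stmt17_general (p : ℕ) (hp : p.Prime) (n μ : ℕ) (hn : n < p ^ μ) :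
    theta p 1 n =
      (∑ i ∈ Finset.range (μ - 1),
        (∏ l ∈ Finset.Ico (i + 2) μ, (digit p n l + 1)) * digit p n (i + 1) *
          (p - digit p n i - 1) * ∏ l ∈ Finset.range i, (digit p n l + 1)) ∧
    (theta p 1 n : ℚ) / (theta p 0 n : ℚ) =
      ∑ cc ∈ Finset.Icc 1 (p - 1), ∑ a ∈ Finset.range (p - 1),
        ((cc : ℚ) / ((cc : ℚ) + 1)) * (((p : ℚ) - (a : ℚ) - 1) / ((a : ℚ) + 1)) *
          (wordCount p [a, cc] n : ℚ) := by
  have hp0 := hp.ne_zero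
  refine ⟨theta_one_eq_sum hp hn, ?_⟩
  have hcount : ∀ c ∈ Icc 1 (p - 1), ∀ a, wordCount p [a, c] n =
      #{i ∈ range (μ - 1) | digit p n i = a ∧ digit p n (i + 1) = c} := fun c hc a =>
    wordCount_pair_eq_card hp0 hn (by simp at hc; omega)
  rw [sum_congr rfl fun c hc => sum_congr rfl fun a _ => by rw [hcount c hc a],
    sum_sum_mul_card_filter _ _ _ (fun c a : ℕ => (c : ℚ) / (c + 1) * ((p - a - 1) / (a + 1))),
    theta_one_div_theta_zero_eq_sum hp hn]
  refine sum_congr rfl fun i _ => (ite_eq_left_iff.2 fun h => ?_).symm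
  have := digit_lt hp0 n i
  have := digit_lt hp0 n (i + 1)
  rcases not_and_or.1 h with h | h
  · rw [show digit p n (i + 1) = 0 by simp at h; omega]
    simp
  · rw [show digit p n i = p - 1 by simp at h; omega, Nat.cast_pred hp.pos]
    simp

/-- Carlitz' explicit formula for `θ_p(1,n)` and the resulting formula
`θ_p(1,n)/θ_p(0,n) = Σ_{c,a} (c/(c+1))·((p−a−1)/(a+1))·|n|_{ca}`.  Here `[a, c]` is the
two-letter word `ca` (rightmost letter `a` first). -/
theorem stmt17 (p : ℕ) (hp : p.Prime) (n μ : ℕ) (hμ : 1 ≤ μ) (hn : n < p ^ μ) :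
    theta p 1 n =
      (∑ i ∈ Finset.range (μ - 1),
        (∏ l ∈ Finset.Ico (i + 2) μ, (digit p n l + 1)) * digit p n (i + 1) *
          (p - digit p n i - 1) * ∏ l ∈ Finset.range i, (digit p n l + 1)) ∧
    (theta p 1 n : ℚ) / (theta p 0 n : ℚ) =
      ∑ cc ∈ Finset.Icc 1 (p - 1), ∑ a ∈ Finset.range (p - 1),
        ((cc : ℚ) / ((cc : ℚ) + 1)) * (((p : ℚ) - (a : ℚ) - 1) / ((a : ℚ) + 1)) *
          (wordCount p [a, cc] n : ℚ) :=
  stmt17_general p hp n μ hn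
end Borrows
end
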